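/- Let n ≥ 1 and let λ_1 ≥ λ_2 ≥ ⋯ ≥ λ_n ≥ 1 be integers with sum N = λ_1 + ⋯ + λ_n, and for m ≥ 1 let r_m := #{i : λ_i = m} (so that ∑_{m≥1} r_m = n). Then n divides the integer (N!/(λ_1!·λ_2!⋯λ_n!)) · (n!/∏_{m≥1} r_m!). -/

import Mathlib

open PowerSeries Finset

noncomputable section

/-- `ℚ[[q]]` -/
abbrev QQ : Type := PowerSeries ℚ
/-- `(ℚ[[q]])[[z]]` -/
abbrev QQZ : Type := PowerSeries QQ

/-- The rank of a partition: largest part minus number of parts. -/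
def Nat.Partition.rank {n : ℕ} (p : n.Partition) : ℤ :=
  (p.parts.sup : ℤ) - (Multiset.card p.parts : ℤ)

/-- `N(m,n)`: the number of partitions of `n` with rank `m`. -/
def Nrk (m : ℤ) (n : ℕ) : ℕ := Nat.card {p : n.Partition // p.rank = m}

/-- The `k`-th rank moment `R_k(q) = ∑_{n≥0} (∑_m m^k N(m,n)) q^n`. -/
def Rmom (k : ℕ) : QQ :=
  PowerSeries.mk fun n => ∑ m ∈ Finset.Icc (-(n : ℤ)) (n : ℤ), (m : ℚ) ^ k * (Nrk m n : ℚ)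

/-- The crank of a partition. -/
def Nat.Partition.crank {n : ℕ} (p : n.Partition) : ℤ :=
  if p.parts.count 1 = 0 then (p.parts.sup : ℤ)
  else ((Multiset.card (p.parts.filter fun x => p.parts.count 1 < x)) : ℤ)
        - (p.parts.count 1 : ℤ)

/-- `M(m,n)`: crank counts, with the exceptional values at `n = 1`. -/
def Mcr (m : ℤ) (n : ℕ) : ℤ :=
  if n = 1 then (if m = 1 ∨ m = -1 then 1 else if m = 0 then -1 else 0)
  else (Nat.card {p : n.Partition // p.crank = m} : ℤ)

/-- The `k`-th crank moment `C_k(q) = ∑_{n≥0} (∑_m m^k M(m,n)) q^n`. -/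
def Cmom (k : ℕ) : QQ :=
  PowerSeries.mk fun n => ∑ m ∈ Finset.Icc (-(n : ℤ)) (n : ℤ), (m : ℚ) ^ k * (Mcr m n : ℚ)

/-- `(q)_∞ = ∏_{n≥1} (1 - q^n)`, defined coefficientwise via its stable truncations. -/
def qPoch : QQ :=
  PowerSeries.mk fun m =>
    PowerSeries.coeff m (∏ n ∈ Finset.Icc 1 m, (1 - (PowerSeries.X : QQ) ^ n))

/-- `S(z) = ∑_{n≥0} z^(2n)/(4^n (2n+1)!)`, the power series of `2 sinh(z/2)/z`. -/
def Sz {R : Type*} [CommRing R] [Algebra ℚ R] : PowerSeries R :=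
  PowerSeries.mk fun m =>
    if Even m then algebraMap ℚ R ((4 ^ (m / 2) * (m + 1).factorial : ℚ))⁻¹ else 0

/-- Formal exponential of a power series (with zero constant term) over a `ℚ`-algebra. -/
def pexp {R : Type*} [CommRing R] [Algebra ℚ R] (F : PowerSeries R) : PowerSeries R :=
  PowerSeries.mk fun m =>
    ∑ n ∈ Finset.range (m + 1), (n.factorial : ℚ)⁻¹ • PowerSeries.coeff m (F ^ n)

/-- `φ(λ) = ∏_j 2^(m_j)/(m_j! (j!)^(m_j))` where `m_j` is the number of parts equal to `j`. -/
def phiP {n : ℕ} (p : n.Partition) : ℚ :=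
  ∏ j ∈ Finset.Icc 1 n,
    (2 : ℚ) ^ (p.parts.count j) /
      ((p.parts.count j).factorial * (j.factorial : ℚ) ^ (p.parts.count j))

/-- `h_λ = ∏_j h_j^(m_j)`. -/
def prodPow {n : ℕ} (h : ℕ → QQ) (p : n.Partition) : QQ :=
  ∏ j ∈ Finset.Icc 1 n, h j ^ (p.parts.count j)

/-- The partition trace `Tr_n(φ,h) = ∑_{λ ⊢ n} φ(λ) h_λ`. -/
def Trphi (h : ℕ → QQ) (n : ℕ) : QQ :=
  ∑ p : n.Partition, PowerSeries.C (phiP p) * prodPow h p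

/-- The partition trace `Tr_n(ψ,h)` with `ψ(λ) = (-1)^(m_1+⋯+m_n) φ(λ)`. -/
def Trpsi (h : ℕ → QQ) (n : ℕ) : QQ :=
  ∑ p : n.Partition,
    PowerSeries.C ((-1) ^ (Multiset.card p.parts) * phiP p) * prodPow h p

/-- The Eisenstein series `G_k = -B_k/(2k) + ∑_{n,m≥1} m^(k-1) q^(nm)` for even `k ≥ 2`,
and `G_k = 0` otherwise. -/
def Gk (k : ℕ) : QQ :=
  if 2 ≤ k ∧ Even k then
    PowerSeries.mk fun r =>
      if r = 0 then -(bernoulli k : ℚ) / (2 * k)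
      else ∑ p ∈ Nat.divisorsAntidiagonal r, (p.2 : ℚ) ^ (k - 1)
  else 0

/-- The Eisenstein-type series `g_ℓ`. -/
def gl (l : ℕ) : QQ :=
  if l = 0 then 1
  else if Odd l then 0
  else
    PowerSeries.mk fun r =>
      if r = 0 then ((1 : ℚ) - 2 ^ (l - 1)) * (bernoulli l : ℚ) / (2 * l)
      else
        (∑ p ∈ Nat.divisorsAntidiagonal r,
          if 3 * (p.2 : ℤ) ≤ 2 * (p.1 : ℤ) - 1 then ((2 * (p.1 : ℤ) - 3 * (p.2 : ℤ) : ℤ) : ℚ) ^ (l - 1) else 0)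
        - (∑ p ∈ Nat.divisorsAntidiagonal r,
          if 6 * (p.2 : ℤ) ≤ (p.1 : ℤ) - 1 then (((p.1 : ℤ) - 6 * (p.2 : ℤ) : ℤ) : ℚ) ^ (l - 1) else 0)

/-- The derivation `D = q d/dq` on `ℚ[[q]]`. -/
def Dq (f : QQ) : QQ := PowerSeries.mk fun n => (n : ℚ) * PowerSeries.coeff n f

/-- `∑_{k≥0} R_k(q) z^k/k!`. -/
def Rgen : QQZ := PowerSeries.mk fun k => (k.factorial : ℚ)⁻¹ • Rmom k

/-- `∑_{k≥0} C_k(q) z^k/k!`. -/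
def Cgen : QQZ := PowerSeries.mk fun k => (k.factorial : ℚ)⁻¹ • Cmom k

/-- The defining identity of the sequence `(f_k)`:
`∑_{k≥0} R_k(q) z^k/k! = S(z) (q)_∞⁻¹ exp(2 ∑_{k≥1} f_k z^k/k!)`. -/
def fHyp (f : ℕ → QQ) : Prop :=
  Rgen = Sz * PowerSeries.C qPoch⁻¹ *
    pexp (PowerSeries.mk fun k => if k = 0 then 0 else (2 * (k.factorial : ℚ)⁻¹) • f k)

/-!
Write `A` for the product of the two multinomial coefficients. Splitting off a part `k` gives
`k · (S choose k) = S · (S - 1 choose k - 1)`, so the sum `S` of the parts of a multinomial coefficient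
divides `k` times it, for every part `k`. Hence `N · n ∣ m · r_m · A` for every `m`: the factor `m`
is a part `λ_i` of the first coefficient and `r_m` is a part of the second one, whose parts sum to
`n`. Summing over `m` gives `N · n ∣ (∑_m m r_m) · A = N · A`, and `N > 0` can be cancelled.
-/

namespace Nat

theorem dvd_mul_choose (n k : ℕ) : n ∣ k * n.choose k := by
  rcases k with _ | k
  · simp
  rcases n with _ | n
  · simp
  exact ⟨n.choose k, by rw [mul_comm, ← add_one_mul_choose_eq]⟩

theorem sum_dvd_mul_multinomial {α : Type*} [DecidableEq α] {s : Finset α} {f : α → ℕ} {a : α}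
    (ha : a ∈ s) : (∑ i ∈ s, f i) ∣ f a * multinomial s f := by
  rw [← insert_erase ha, multinomial_insert (notMem_erase a s), sum_insert (notMem_erase a s),
    ← mul_assoc]
  exact (dvd_mul_choose _ _).mul_right _

theorem card_dvd_multinomial_mul_multinomial_card_fiber {ι : Type*} [Fintype ι] [DecidableEq ι]
    (lam : ι → ℕ) (t : Finset ℕ) (ht : ∀ i, lam i ∈ t) (hsum : ∑ i, lam i ≠ 0) :
    Fintype.card ι ∣
      multinomial univ lam * multinomial t fun m => #{i | lam i = m} := by
  set r : ℕ → ℕ := fun m => #{i | lam i = m}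
  have hr_sum : ∑ m ∈ t, r m = Fintype.card ι :=
    (card_eq_sum_card_fiberwise fun i _ => ht i).symm
  have hmr_sum : ∑ m ∈ t, m * r m = ∑ i, lam i := by
    rw [← sum_fiberwise_of_maps_to (g := lam) (fun i _ => ht i)]
    refine sum_congr rfl fun m _ => ?_
    rw [sum_const_nat fun i hi => (mem_filter.mp hi).2, mul_comm]
  refine Nat.dvd_of_mul_dvd_mul_left (pos_of_ne_zero hsum) ?_
  conv_rhs => rw [← hmr_sum, sum_mul]
  refine Finset.dvd_sum fun m hm => ?_
  rcases (r m).eq_zero_or_pos with hrm | hrm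
  · simp [hrm]
  obtain ⟨i, hi⟩ := Finset.card_pos.mp hrm
  obtain rfl : lam i = m := (mem_filter.mp hi).2
  rw [mul_mul_mul_comm]
  exact mul_dvd_mul (sum_dvd_mul_multinomial (mem_univ i)) (hr_sum ▸ sum_dvd_mul_multinomial hm)

end Nat

theorem n_dvd_multinomial_times_multiplicity_multinomial_general (n : ℕ) (hn : 1 ≤ n)
    (lam : Fin n → ℕ) (hpos : ∀ i, 1 ≤ lam i)
    (N : ℕ) (hN : N = ∑ i, lam i)
    (r : ℕ → ℕ) (hr : ∀ m, r m = (Finset.univ.filter fun i => lam i = m).card) :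
    n ∣ Nat.multinomial Finset.univ lam * Nat.multinomial (Finset.Icc 1 N) r := by
  subst hN
  have hle : ∀ i, lam i ≤ ∑ j, lam j := fun i => single_le_sum (fun j _ => Nat.zero_le _) (mem_univ i)
  have hsum : ∑ i, lam i ≠ 0 := Nat.one_le_iff_ne_zero.mp ((hpos ⟨0, hn⟩).trans (hle _))
  rw [funext hr]
  simpa only [Fintype.card_fin] using Nat.card_dvd_multinomial_mul_multinomial_card_fiber lam
    (Icc 1 (∑ i, lam i)) (fun i => mem_Icc.mpr ⟨hpos i, hle i⟩) hsum

/-- `n` divides `(N!/(λ_1!⋯λ_n!)) · (n!/∏_m r_m!)`. -/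
theorem n_dvd_multinomial_times_multiplicity_multinomial (n : ℕ) (hn : 1 ≤ n)
    (lam : Fin n → ℕ) (hpos : ∀ i, 1 ≤ lam i) (hanti : Antitone lam)
    (N : ℕ) (hN : N = ∑ i, lam i)
    (r : ℕ → ℕ) (hr : ∀ m, r m = (Finset.univ.filter fun i => lam i = m).card) :
    n ∣ Nat.multinomial Finset.univ lam * Nat.multinomial (Finset.Icc 1 N) r :=
  n_dvd_multinomial_times_multiplicity_multinomial_general n hn lam hpos N hN r hr

end
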